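/- For the path P_n with n ≥ 1, the zero blocking number satisfies B(P_n) = ⌈(n+1)/2⌉. -/

import Mathlib

open Set

/-- One step of the zero forcing process on the set `W` of white vertices:
a white vertex is removed (colored black) if it is the unique white neighbor
of some black vertex. -/
def zbStep {V : Type*} (G : SimpleGraph V) (W : Set V) : Set V :=
  {w ∈ W | ¬ ∃ b ∉ W, G.Adj b w ∧ ∀ w' ∈ W, G.Adj b w' → w' = w}

/-- `W` is a zero blocking set: the zero forcing process started with white set `W`
never colors all of `W` black. -/
def IsZeroBlocking {V : Type*} (G : SimpleGraph V) (W : Set V) : Prop :=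
  ∀ n : ℕ, ((zbStep G)^[n] W).Nonempty

/-- The zero blocking number `B(G)`. -/
noncomputable def zbNum {V : Type*} (G : SimpleGraph V) : ℕ∞ :=
  ⨅ (W : Set V) (_ : IsZeroBlocking G W), W.encard

/-! ### Auxiliary lemmas -/

lemma zbStep_subset {V : Type*} (G : SimpleGraph V) (W : Set V) : zbStep G W ⊆ W :=
  fun _ h => h.1

lemma zbStep_iterate_subset {V : Type*} (G : SimpleGraph V) (W : Set V) (k : ℕ) :
    (zbStep G)^[k] W ⊆ W := by
  induction k with
  | zero => simp
  | succ k ih =>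
    rw [Function.iterate_succ_apply']
    exact (zbStep_subset G _).trans ih

/-- From a blocking set on a finite vertex type we can extract a nonempty subset that is
a fixed point of `zbStep`. -/
lemma exists_fixed_of_blocking {V : Type*} [Finite V] (G : SimpleGraph V) (W : Set V)
    (hW : IsZeroBlocking G W) :
    ∃ F : Set V, F.Nonempty ∧ F ⊆ W ∧ zbStep G F = F := by
  set u : ℕ → Set V := fun k => (zbStep G)^[k] W with hu
  have hne : (Set.range fun k => (u k).ncard).Nonempty := ⟨(u 0).ncard, ⟨0, rfl⟩⟩
  obtain ⟨k, hk⟩ := Nat.sInf_mem hne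
  refine ⟨u k, hW k, zbStep_iterate_subset G W k, ?_⟩
  have hsub : zbStep G (u k) ⊆ u k := zbStep_subset G _
  have hstep : zbStep G (u k) = u (k + 1) := (Function.iterate_succ_apply' (zbStep G) k W).symm
  have hk' : (u k).ncard = sInf (Set.range fun k => (u k).ncard) := hk
  have hle : (u k).ncard ≤ (zbStep G (u k)).ncard := by
    rw [hstep, hk']
    exact Nat.sInf_le ⟨k + 1, rfl⟩
  exact (Set.eq_of_subset_of_ncard_le hsub hle (Set.toFinite _)).symm ▸ rfl


lemma fort_exists_other {n : ℕ} {F : Set (Fin n)}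
    (hfix : zbStep (SimpleGraph.pathGraph n) F = F)
    {w b : Fin n} (hw : w ∈ F) (hb : b ∉ F)
    (hadj : (SimpleGraph.pathGraph n).Adj b w) :
    ∃ w' ∈ F, (SimpleGraph.pathGraph n).Adj b w' ∧ w' ≠ w := by
  rw [← hfix] at hw
  by_contra hcon
  push_neg at hcon
  refine hw.2 ⟨b, hb, hadj, fun w' hw' ha' => ?_⟩
  by_contra hne
  exact hne (hcon w' hw' ha')

lemma zero_mem_of_fixed {n : ℕ} {F : Set (Fin n)}
    (hfix : zbStep (SimpleGraph.pathGraph n) F = F) (hne : F.Nonempty) (hn : 0 < n) :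
    (⟨0, hn⟩ : Fin n) ∈ F := by
  by_contra h0
  have all : ∀ k, ∀ h : k < n, (⟨k, h⟩ : Fin n) ∉ F := by
    intro k
    induction k using Nat.strong_induction_on with
    | _ k ih =>
      intro hk hkF
      rcases Nat.eq_zero_or_pos k with rfl | hk1
      · exact h0 hkF
      · have hb : (⟨k - 1, by omega⟩ : Fin n) ∉ F := ih (k - 1) (by omega) (by omega)
        have hadj : (SimpleGraph.pathGraph n).Adj ⟨k - 1, by omega⟩ ⟨k, hk⟩ := by
          rw [SimpleGraph.pathGraph_adj]; left; simp; omega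
        obtain ⟨w', hw'F, hw'adj, hw'ne⟩ := fort_exists_other hfix hkF hb hadj
        rw [SimpleGraph.pathGraph_adj] at hw'adj
        have hw'adj' : k - 1 + 1 = w'.val ∨ w'.val + 1 = k - 1 := hw'adj
        rcases hw'adj' with h1 | h2
        · exact hw'ne (Fin.ext (show w'.val = k by omega))
        · have hlt : w'.val < k := by omega
          have := ih w'.val hlt w'.isLt
          simp only [Fin.eta] at this
          exact this hw'F
  obtain ⟨x, hx⟩ := hne
  have := all x.val x.isLt
  simp only [Fin.eta] at this
  exact this hx

lemma no_two_gaps {n : ℕ} {F : Set (Fin n)}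
    (hfix : zbStep (SimpleGraph.pathGraph n) F = F) (hne : F.Nonempty) (hn : 0 < n) :
    ∀ k, ∀ h1 : k < n, ∀ h2 : k + 1 < n,
      (⟨k, h1⟩ : Fin n) ∉ F → (⟨k + 1, h2⟩ : Fin n) ∉ F → False := by
  intro k
  induction k with
  | zero => intro h1 _ hk _; exact hk (zero_mem_of_fixed hfix hne hn)
  | succ k ih =>
    intro h1 h2 hk1 hk2
    refine ih (by omega) h1 ?_ hk1
    intro hkF
    have hadj : (SimpleGraph.pathGraph n).Adj ⟨k + 1, h1⟩ ⟨k, by omega⟩ := by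
      rw [SimpleGraph.pathGraph_adj]; right; simp
    obtain ⟨w', hw'F, hw'adj, hw'ne⟩ := fort_exists_other hfix hkF hk1 hadj
    rw [SimpleGraph.pathGraph_adj] at hw'adj
    have hw'adj' : k + 1 + 1 = w'.val ∨ w'.val + 1 = k + 1 := hw'adj
    rcases hw'adj' with hc1 | hc2
    · have : w' = ⟨k + 2, h2⟩ := Fin.ext (show w'.val = k + 2 by omega)
      exact hk2 (this ▸ hw'F)
    · exact hw'ne (Fin.ext (show w'.val = k by omega))

lemma last_mem_of_fixed {n : ℕ} {F : Set (Fin n)}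
    (hfix : zbStep (SimpleGraph.pathGraph n) F = F) (hne : F.Nonempty) (hn : 0 < n) :
    (⟨n - 1, by omega⟩ : Fin n) ∈ F := by
  by_contra hl
  rcases eq_or_lt_of_le (show 1 ≤ n from hn) with h1 | h2
  · exact hl (by have := zero_mem_of_fixed hfix hne hn; convert this using 2; omega)
  · -- n ≥ 2
    have hn2 : 2 ≤ n := h2
    have hgap : (⟨n - 2, by omega⟩ : Fin n) ∉ F := by
      intro hmem
      have hadj : (SimpleGraph.pathGraph n).Adj ⟨n - 1, by omega⟩ ⟨n - 2, by omega⟩ := by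
        rw [SimpleGraph.pathGraph_adj]; right
        exact show n - 2 + 1 = n - 1 by omega
      obtain ⟨w', hw'F, hw'adj, hw'ne⟩ := fort_exists_other hfix hmem hl hadj
      rw [SimpleGraph.pathGraph_adj] at hw'adj
      have hw'adj' : n - 1 + 1 = w'.val ∨ w'.val + 1 = n - 1 := hw'adj
      have := w'.isLt
      rcases hw'adj' with hc1 | hc2
      · omega
      · exact hw'ne (Fin.ext (show w'.val = n - 2 by omega))
    have heq : (⟨n - 2 + 1, by omega⟩ : Fin n) = ⟨n - 1, by omega⟩ :=
      Fin.ext (show n - 2 + 1 = n - 1 by omega)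
    exact no_two_gaps hfix hne hn (n - 2) (by omega) (by omega) hgap (heq ▸ hl)

lemma fort_card {n : ℕ} {F : Set (Fin n)}
    (hfix : zbStep (SimpleGraph.pathGraph n) F = F) (hne : F.Nonempty) (hn : 0 < n) :
    (n + 2) / 2 ≤ F.ncard := by
  have h0 := zero_mem_of_fixed hfix hne hn
  have hlast := last_mem_of_fixed hfix hne hn
  have hcompl : Fᶜ.ncard ≤ (n - 1) / 2 := by
    have key := Set.ncard_le_ncard_of_injOn (s := Fᶜ)
      (t := (↑(Finset.range ((n - 1) / 2)) : Set ℕ))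
      (fun i : Fin n => (i.val - 1) / 2) ?_ ?_ (Finset.range _).finite_toSet
    · rwa [Set.ncard_coe_finset, Finset.card_range] at key
    · intro i hi
      have hi' : i ∉ F := hi
      have hne0 : i.val ≠ 0 := by
        intro h
        exact hi' (by have : i = ⟨0, hn⟩ := Fin.ext h; rw [this]; exact h0)
      have hnel : i.val ≠ n - 1 := by
        intro h
        exact hi' (by have : i = ⟨n - 1, by omega⟩ := Fin.ext h; rw [this]; exact hlast)
      have := i.isLt
      simp only [Finset.coe_range, Set.mem_Iio]
      omega
    · intro i hi j hj hij
      by_contra hnij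
      have hij' : i.val ≠ j.val := fun h => hnij (Fin.ext h)
      have hi' : i ∉ F := hi
      have hj' : j ∉ F := hj
      have hne0i : i.val ≠ 0 := fun h => hi' (by have : i = ⟨0, hn⟩ := Fin.ext h; rw [this]; exact h0)
      have hne0j : j.val ≠ 0 := fun h => hj' (by have : j = ⟨0, hn⟩ := Fin.ext h; rw [this]; exact h0)
      have hii := i.isLt
      have hjj := j.isLt
      have hij2 : (i.val - 1) / 2 = (j.val - 1) / 2 := hij
      have hcases : j.val = i.val + 1 ∨ i.val = j.val + 1 := by omega
      rcases hcases with hc | hc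
      · exact no_two_gaps hfix hne hn i.val hii (by omega)
          (by simpa using hi') (by have : j = ⟨i.val + 1, by omega⟩ := Fin.ext hc; rw [this] at hj'; exact hj')
      · exact no_two_gaps hfix hne hn j.val hjj (by omega)
          (by simpa using hj') (by have : i = ⟨j.val + 1, by omega⟩ := Fin.ext hc; rw [this] at hi'; exact hi')
  have htot : F.ncard + Fᶜ.ncard = n := by
    rw [Set.ncard_add_ncard_compl]
    simp [Nat.card_eq_fintype_card]
  omega

def pathBlock (n : ℕ) : Set (Fin n) := {i | i.val % 2 = 0 ∨ i.val = n - 1}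

lemma pathBlock_fixed (n : ℕ) :
    zbStep (SimpleGraph.pathGraph n) (pathBlock n) = pathBlock n := by
  ext i
  constructor
  · exact fun h => h.1
  · intro hi
    refine ⟨hi, ?_⟩
    rintro ⟨b, hb, hadj, huniq⟩
    have hb' : ¬(b.val % 2 = 0 ∨ b.val = n - 1) := hb
    push_neg at hb'
    obtain ⟨hodd, hbl⟩ := hb'
    have hblt := b.isLt
    have h1 : 1 ≤ b.val := by omega
    have h2 : b.val + 1 < n := by omega
    set w1 : Fin n := ⟨b.val - 1, by omega⟩ with hw1
    set w2 : Fin n := ⟨b.val + 1, h2⟩ with hw2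
    have hw1m : w1 ∈ pathBlock n := Or.inl (show (b.val - 1) % 2 = 0 by omega)
    have hw2m : w2 ∈ pathBlock n := Or.inl (show (b.val + 1) % 2 = 0 by omega)
    have ha1 : (SimpleGraph.pathGraph n).Adj b w1 := by
      rw [SimpleGraph.pathGraph_adj]; right; exact show b.val - 1 + 1 = b.val by omega
    have ha2 : (SimpleGraph.pathGraph n).Adj b w2 := by
      rw [SimpleGraph.pathGraph_adj]; left; rfl
    have e1 := huniq w1 hw1m ha1
    have e2 := huniq w2 hw2m ha2
    have : w1 = w2 := e1.trans e2.symm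
    have : b.val - 1 = b.val + 1 := congrArg Fin.val this
    omega

lemma pathBlock_encard (n : ℕ) (hn : 1 ≤ n) :
    (pathBlock n).encard = (((n + 2) / 2 : ℕ) : ℕ∞) := by
  have hinj : Set.InjOn (fun i : Fin n => (i.val + 1) / 2) (pathBlock n) := by
    intro i hi j hj hij
    have hij2 : (i.val + 1) / 2 = (j.val + 1) / 2 := hij
    have hi' : i.val % 2 = 0 ∨ i.val = n - 1 := hi
    have hj' : j.val % 2 = 0 ∨ j.val = n - 1 := hj
    have := i.isLt; have := j.isLt
    exact Fin.ext (by omega)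
  have himg : (fun i : Fin n => (i.val + 1) / 2) '' (pathBlock n) =
      (↑(Finset.range ((n + 2) / 2)) : Set ℕ) := by
    ext k
    simp only [Set.mem_image, Finset.coe_range, Set.mem_Iio]
    constructor
    · rintro ⟨i, hi, rfl⟩
      have hi' : i.val % 2 = 0 ∨ i.val = n - 1 := hi
      have := i.isLt
      show (i.val + 1) / 2 < (n + 2) / 2
      omega
    · intro hk
      by_cases h2k : 2 * k < n
      · exact ⟨⟨2 * k, h2k⟩, Or.inl (show 2 * k % 2 = 0 by omega),
          show (2 * k + 1) / 2 = k by omega⟩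
      · exact ⟨⟨n - 1, by omega⟩, Or.inr rfl, show (n - 1 + 1) / 2 = k by omega⟩
  calc (pathBlock n).encard
      = ((fun i : Fin n => (i.val + 1) / 2) '' (pathBlock n)).encard := (hinj.encard_image).symm
    _ = (((n + 2) / 2 : ℕ) : ℕ∞) := by
        rw [himg, Set.encard_coe_eq_coe_finsetCard, Finset.card_range]


theorem zbNum_pathGraph (n : ℕ) (hn : 1 ≤ n) :
    zbNum (SimpleGraph.pathGraph n) = (((n + 1 + 1) / 2 : ℕ) : ℕ∞) := by
  have hn0 : 0 < n := hn
  unfold zbNum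
  apply le_antisymm
  · have hblock : IsZeroBlocking (SimpleGraph.pathGraph n) (pathBlock n) := by
      intro k
      rw [Function.iterate_fixed (pathBlock_fixed n) k]
      exact ⟨⟨0, hn0⟩, Or.inl rfl⟩
    have hle := iInf₂_le (f := fun (W : Set (Fin n)) (_ : IsZeroBlocking (SimpleGraph.pathGraph n) W) => W.encard) (pathBlock n) hblock
    refine hle.trans ?_
    rw [pathBlock_encard n hn]
  · refine le_iInf₂ fun W hW => ?_
    obtain ⟨F, hFne, hFW, hfix⟩ := exists_fixed_of_blocking _ W hW
    have h1 : (n + 2) / 2 ≤ F.ncard := fort_card hfix hFne hn0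
    have h1' : (n + 1 + 1) / 2 ≤ F.ncard := by omega
    calc (((n + 1 + 1) / 2 : ℕ) : ℕ∞) ≤ (F.ncard : ℕ∞) := by exact_mod_cast h1'
      _ = F.encard := (Set.toFinite F).cast_ncard_eq
      _ ≤ W.encard := Set.encard_le_encard hFW
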